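/- arXiv:2003.02458 — 3 statements merged into one kernel-verified Lean document; each statement's English description precedes it below -/
import Mathlib

section
/- Let K = 1 and M ≥ 2, and suppose G_1 and G_z are positive definite Hermitian M×M complex matrices. If W = [w_1, W_z] ∈ ℂ^{M×M} is invertible and satisfies the stationary conditions W^H G_1 w_1 = e_1 and W^H G_z W_z = E_z, then there exist a vector u_1 ∈ ℂ^M and a real number λ with G_z u_1 = λ G_1 u_1 and u_1 ≠ 0, a matrix U_z ∈ ℂ^{M×(M−1)} with U_z^H G_z u_1 = 0 and U_z^H G_z U_z positive definite, a real number θ, and a unitary matrix Q ∈ ℂ^{(M−1)×(M−1)}, such that w_1 = u_1 (u_1^H G_1 u_1)^{−1/2} e^{iθ} and W_z = U_z (U_z^H G_z U_z)^{−1/2} Q. -/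
/- M×M complex matrices (M = 1 + L ≥ 2) are encoded as matrices indexed by
`Fin 1 ⊕ Fin L`. The first column (`Sum.inl 0`) is `w_1` and the last `L`
columns (`Sum.inr`) form `W_z`. `e_1 = Pi.single (Sum.inl 0) 1` and
`E_z = [e_2, …, e_M]`. For a positive definite Hermitian `B`, `B^{−1/2}` is
`S⁻¹` where `S` is the unique positive definite matrix with `S * S = B`;
for the positive real `u_1ᴴ G_1 u_1`, its `−1/2` power is
`(Real.sqrt (u_1ᴴ G_1 u_1).re)⁻¹`. -/

open Matrix
open scoped ComplexOrder

def Ez (L : ℕ) : Matrix (Fin 1 ⊕ Fin L) (Fin L) ℂ :=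
  Matrix.of fun i j => if i = Sum.inr j then 1 else 0

/-! The stationarity conditions say that the Hermitian Gram matrix `Wᴴ G_z W` has the block
form `diag(c, I)`, with `c = w_1ᴴ G_z w_1` real. Hence `Wᴴ G_z w_1 = c e_1 = c Wᴴ G_1 w_1`, and
since `Wᴴ` is invertible, `G_z w_1 = c G_1 w_1`. So `W` is already of the required form:
`u_1 = w_1` (with `w_1ᴴ G_1 w_1 = 1`), `θ = 0`, `U_z = W_z` (with `W_zᴴ G_z W_z = I`),
and `Q = S = I`. -/

theorem Ez_eq_fromRows (L : ℕ) : Ez L = fromRows 0 1 := by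
  ext (i | i) j <;> simp [Ez, one_apply]

section Gram

variable {α m n p : Type*} [Fintype m]

theorem mulVec_col [NonUnitalNonAssocSemiring α] (A : Matrix n m α) (B : Matrix m p α) (j : p) :
    (A *ᵥ fun i => B i j) = fun k => (A * B) k j :=
  rfl

theorem conjTranspose_mulVec_apply [NonUnitalNonAssocSemiring α] [StarRing α]
    (W : Matrix m n α) (v : m → α) (j : n) :
    (Wᴴ *ᵥ v) j = star (fun i => W i j) ⬝ᵥ v :=
  rfl

theorem conjTranspose_submatrix_mul_mul_submatrix [NonUnitalNonAssocSemiring α] [StarRing α]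
    {q r : Type*} (W : Matrix m n α) (G : Matrix m m α) (e : q → n) (e' : r → n) :
    (W.submatrix id e)ᴴ * G * W.submatrix id e' = (Wᴴ * G * W).submatrix e e' :=
  rfl

theorem star_dotProduct_mulVec_col_eq_one [DecidableEq n] [Semiring α] [StarRing α]
    {W : Matrix m n α} {G : Matrix m m α} {j : n}
    (h : (Wᴴ * G) *ᵥ (fun i => W i j) = Pi.single j 1) :
    star (fun i => W i j) ⬝ᵥ (G *ᵥ fun i => W i j) = 1 := by
  have hj := congrFun h j
  rwa [← mulVec_mulVec, Pi.single_eq_same] at hj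

end Gram

theorem Matrix.IsHermitian.apply_inr_inl_eq_zero {α ι n : Type*} [AddMonoid α] [StarAddMonoid α]
    {A : Matrix (ι ⊕ n) (ι ⊕ n) α} (hA : A.IsHermitian) {B : Matrix n n α}
    (hAB : A.submatrix id Sum.inr = fromRows 0 B) (i : ι) (j : n) :
    A (Sum.inr j) (Sum.inl i) = 0 := by
  have h := congrFun₂ hAB (Sum.inl i) j
  rw [submatrix_apply, id, fromRows_apply_inl, Matrix.zero_apply] at h
  rw [← hA.apply, h, star_zero]

theorem mulVec_col_inl_eq_smul_of_stationary {n : Type*} [Fintype n] [DecidableEq n]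
    {G1 Gz W : Matrix (Fin 1 ⊕ n) (Fin 1 ⊕ n) ℂ} {B : Matrix n n ℂ}
    (hGz : Gz.IsHermitian) (hW : IsUnit W.det)
    (hst1 : (Wᴴ * G1) *ᵥ (fun i => W i (Sum.inl 0)) = Pi.single (Sum.inl 0) 1)
    (hstz : (Wᴴ * Gz * W).submatrix id Sum.inr = fromRows 0 B) :
    Gz *ᵥ (fun i => W i (Sum.inl 0)) = ((star (fun i => W i (Sum.inl 0)) ⬝ᵥ
      (Gz *ᵥ fun i => W i (Sum.inl 0))).re : ℂ) • (G1 *ᵥ fun i => W i (Sum.inl 0)) := by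
  set w := fun i => W i (Sum.inl 0)
  set c := star w ⬝ᵥ (Gz *ᵥ w)
  have hA := isHermitian_conjTranspose_mul_mul W hGz
  have hc : c = (Wᴴ * Gz * W) (Sum.inl 0) (Sum.inl 0) := by
    change (Wᴴ *ᵥ (Gz *ᵥ w)) (Sum.inl 0) = _
    rw [mulVec_mulVec, mulVec_col]
  have hgram : Wᴴ *ᵥ (Gz *ᵥ w) = c • Pi.single (Sum.inl 0) 1 := by
    ext (i | j)
    · rw [Fin.fin_one_eq_zero i, conjTranspose_mulVec_apply]
      simp [c, w]
    · rw [mulVec_mulVec, mulVec_col]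
      simp [hA.apply_inr_inl_eq_zero hstz]
  have hreal : (c.re : ℂ) = c := Complex.conj_eq_iff_re.mp (hc ▸ hA.apply _ _)
  have hinj : Function.Injective Wᴴ.mulVec := by
    rw [mulVec_injective_iff_isUnit, isUnit_iff_isUnit_det, det_conjTranspose]
    exact hW.star
  apply hinj
  rw [hreal, mulVec_smul, hgram, mulVec_mulVec, hst1]

section TrailingColumns

variable {α ι n : Type*} [Fintype ι] [Fintype n] {G W : Matrix (ι ⊕ n) (ι ⊕ n) α}

theorem conjTranspose_submatrix_inr_mul_mul_eq_one [Semiring α] [StarRing α] [DecidableEq n]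
    {B : Matrix ι n α} (h : (Wᴴ * G * W).submatrix id Sum.inr = fromRows B 1) :
    (W.submatrix id Sum.inr)ᴴ * G * W.submatrix id Sum.inr = 1 := by
  rw [conjTranspose_submatrix_mul_mul_submatrix]
  ext i j
  simpa using congrFun₂ h (Sum.inr i) j

theorem conjTranspose_submatrix_inr_mul_mulVec_col_inl_eq_zero [Semiring α] [StarRing α]
    (hG : G.IsHermitian) {B : Matrix n n α}
    (h : (Wᴴ * G * W).submatrix id Sum.inr = fromRows 0 B) (i : ι) :
    ((W.submatrix id Sum.inr)ᴴ * G) *ᵥ (fun k => W k (Sum.inl i)) = 0 :=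
  funext fun j => (isHermitian_conjTranspose_mul_mul W hG).apply_inr_inl_eq_zero h i j

end TrailingColumns

theorem stationary_implies_gevp_form_general (L : ℕ)
    (G1 Gz : Matrix (Fin 1 ⊕ Fin L) (Fin 1 ⊕ Fin L) ℂ)
    (hGz : Gz.PosDef)
    (W : Matrix (Fin 1 ⊕ Fin L) (Fin 1 ⊕ Fin L) ℂ) (hW : IsUnit W.det)
    (w1 : Fin 1 ⊕ Fin L → ℂ) (hw1 : w1 = fun i => W i (Sum.inl 0))
    (Wz : Matrix (Fin 1 ⊕ Fin L) (Fin L) ℂ) (hWz : Wz = W.submatrix id Sum.inr)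
    (hst1 : (Wᴴ * G1) *ᵥ w1 = Pi.single (Sum.inl 0) 1)
    (hstz : Wᴴ * Gz * Wz = Ez L) :
    ∃ (u1 : Fin 1 ⊕ Fin L → ℂ) (lam θ : ℝ)
      (Uz : Matrix (Fin 1 ⊕ Fin L) (Fin L) ℂ)
      (Q : Matrix (Fin L) (Fin L) ℂ),
        u1 ≠ 0 ∧
        Gz *ᵥ u1 = (lam : ℂ) • (G1 *ᵥ u1) ∧
        (Uzᴴ * Gz) *ᵥ u1 = 0 ∧
        (Uzᴴ * Gz * Uz).PosDef ∧
        Qᴴ * Q = 1 ∧ Q * Qᴴ = 1 ∧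
        w1 = (Complex.exp (θ * Complex.I) *
          ((Real.sqrt ((star u1 ⬝ᵥ (G1 *ᵥ u1)).re))⁻¹ : ℝ)) • u1 ∧
        ∃ S : Matrix (Fin L) (Fin L) ℂ,
          S.PosDef ∧ S * S = Uzᴴ * Gz * Uz ∧ Wz = Uz * S⁻¹ * Q := by
  subst hw1 hWz
  have hgram : (Wᴴ * Gz * W).submatrix id Sum.inr = fromRows 0 1 := by
    rw [← Ez_eq_fromRows, ← hstz]
    rfl
  have heig := mulVec_col_inl_eq_smul_of_stationary hGz.isHermitian hW hst1 hgram
  have hnorm := star_dotProduct_mulVec_col_eq_one hst1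
  have horth := conjTranspose_submatrix_inr_mul_mulVec_col_inl_eq_zero hGz.isHermitian hgram 0
  have hunit := conjTranspose_submatrix_inr_mul_mul_eq_one hgram
  refine ⟨_, _, 0, _, 1, ?_, heig, horth, hunit ▸ PosDef.one, by simp, by simp, by simp [hnorm],
    1, PosDef.one, by rw [hunit, one_mul], by simp⟩
  rintro h
  simp [h] at hnorm

/-- If an invertible `W = [w_1, W_z]` satisfies the stationary conditions
`Wᴴ G_1 w_1 = e_1` and `Wᴴ G_z W_z = E_z`, then there are a generalized
eigenpair `(u_1, λ)` of `(G_z, G_1)`, a matrix `U_z` with `U_zᴴ G_z u_1 = 0` and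
`U_zᴴ G_z U_z` positive definite, a real `θ` and a unitary `Q` such that
`w_1 = u_1 (u_1ᴴ G_1 u_1)^{−1/2} e^{iθ}` and `W_z = U_z (U_zᴴ G_z U_z)^{−1/2} Q`. -/
theorem stationary_implies_gevp_form (L : ℕ) (hL : 1 ≤ L)
    (G1 Gz : Matrix (Fin 1 ⊕ Fin L) (Fin 1 ⊕ Fin L) ℂ)
    (hG1 : G1.PosDef) (hGz : Gz.PosDef)
    (W : Matrix (Fin 1 ⊕ Fin L) (Fin 1 ⊕ Fin L) ℂ) (hW : IsUnit W.det)
    (w1 : Fin 1 ⊕ Fin L → ℂ) (hw1 : w1 = fun i => W i (Sum.inl 0))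
    (Wz : Matrix (Fin 1 ⊕ Fin L) (Fin L) ℂ) (hWz : Wz = W.submatrix id Sum.inr)
    (hst1 : (Wᴴ * G1) *ᵥ w1 = Pi.single (Sum.inl 0) 1)
    (hstz : Wᴴ * Gz * Wz = Ez L) :
    ∃ (u1 : Fin 1 ⊕ Fin L → ℂ) (lam θ : ℝ)
      (Uz : Matrix (Fin 1 ⊕ Fin L) (Fin L) ℂ)
      (Q : Matrix (Fin L) (Fin L) ℂ),
        u1 ≠ 0 ∧
        Gz *ᵥ u1 = (lam : ℂ) • (G1 *ᵥ u1) ∧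
        (Uzᴴ * Gz) *ᵥ u1 = 0 ∧
        (Uzᴴ * Gz * Uz).PosDef ∧
        Qᴴ * Q = 1 ∧ Q * Qᴴ = 1 ∧
        w1 = (Complex.exp (θ * Complex.I) *
          ((Real.sqrt ((star u1 ⬝ᵥ (G1 *ᵥ u1)).re))⁻¹ : ℝ)) • u1 ∧
        ∃ S : Matrix (Fin L) (Fin L) ℂ,
          S.PosDef ∧ S * S = Uzᴴ * Gz * Uz ∧ Wz = Uz * S⁻¹ * Q :=
  stationary_implies_gevp_form_general L G1 Gz hGz W hW w1 hw1 Wz hWz hst1 hstz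
end

section
/- Let K = 1 and M ≥ 2, and suppose G_1 and G_z are positive definite Hermitian M×M complex matrices. Let u_1 ∈ ℂ^M be nonzero with G_z u_1 = λ G_1 u_1 for some real λ, let U_z ∈ ℂ^{M×(M−1)} satisfy U_z^H G_z u_1 = 0 with [u_1, U_z] invertible, let θ ∈ ℝ and let Q ∈ ℂ^{(M−1)×(M−1)} be unitary. Then the matrix W = [w_1, W_z] with w_1 = u_1 (u_1^H G_1 u_1)^{−1/2} e^{iθ} and W_z = U_z (U_z^H G_z U_z)^{−1/2} Q is invertible and satisfies the stationary conditions W^H G_1 w_1 = e_1 and W^H G_z W_z = E_z. -/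
/- `W = [u_1, U_z] · diag(c, S⁻¹ Q)` with `c = e^{iθ} (u_1ᴴ G_1 u_1)^{−1/2}`, so `W` is invertible.
Since `G_z` is nonsingular, `λ ≠ 0`, hence `G_1 u_1 = λ⁻¹ G_z u_1` is, like `G_z u_1`, orthogonal
to the columns of `U_z`. Both Gram matrices are therefore block diagonal, with diagonal blocks
`|c|² u_1ᴴ G_1 u_1 = 1` and `Qᴴ S⁻¹ (S S) S⁻¹ Q = 1`. -/

/- M×M complex matrices (M = 1 + L) are indexed by `Fin 1 ⊕ Fin L`; `[v, A]` is
`Matrix.fromCols (Matrix.of fun i (_ : Fin 1) => v i) A`. `B^{−1/2}` is `S⁻¹` for any positive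
definite `S` with `S * S = B`. -/

open Matrix
open scoped ComplexOrder

theorem Complex.star_mul_mul_eq_one_of_pos {α : ℂ} (hα : 0 < α) (θ : ℝ) :
    star (exp (θ * I) * ((√α.re)⁻¹ : ℝ)) * α * (exp (θ * I) * ((√α.re)⁻¹ : ℝ)) = 1 := by
  obtain ⟨hre, him⟩ := Complex.lt_def.mp hα
  set c : ℂ := exp (θ * I) * ((√α.re)⁻¹ : ℝ)
  have hα_ofReal : α = (α.re : ℂ) := Complex.ext rfl (by simp [← him])
  have hnorm : ‖c‖ ^ 2 = α.re⁻¹ := by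
    simp [c, norm_exp_ofReal_mul_I, inv_pow, Real.sq_sqrt hre.le, abs_of_nonneg]
  calc star c * α * c = ((‖c‖ ^ 2 : ℝ) : ℂ) * α := by
        rw [mul_comm _ α, mul_assoc, Complex.star_def, Complex.conj_mul', mul_comm]; push_cast; ring
    _ = 1 := by rw [hnorm, hα_ofReal]; norm_cast; exact inv_mul_cancel₀ hre.ne'

namespace Matrix

section Blocks

variable {m l n R : Type*} [CommRing R]

theorem isUnit_det_fromCols_mul [Fintype l] [Fintype n] [DecidableEq l] [DecidableEq n]
    {A : Matrix (l ⊕ n) l R} {B : Matrix (l ⊕ n) n R} {C : Matrix l l R} {D : Matrix n n R}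
    (hAB : IsUnit (fromCols A B).det) (hC : IsUnit C.det) (hD : IsUnit D.det) :
    IsUnit (fromCols (A * C) (B * D)).det := by
  have hfactor : fromCols (A * C) (B * D) = fromCols A B * fromBlocks C 0 0 D := by
    simp [fromCols_mul_fromBlocks]
  rw [hfactor, det_mul, det_fromBlocks_zero₂₁]
  exact hAB.mul (hC.mul hD)

variable [Fintype m] [StarRing R]

theorem conjTranspose_fromCols_mul_mulVec (A : Matrix m l R) (B : Matrix m n R)
    (G : Matrix m m R) (w : m → R) :
    ((fromCols A B)ᴴ * G) *ᵥ w = Sum.elim ((Aᴴ * G) *ᵥ w) ((Bᴴ * G) *ᵥ w) := by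
  rw [conjTranspose_fromCols_eq_fromRows_conjTranspose, fromRows_mul, fromRows_mulVec]

theorem conjTranspose_fromCols_mul_mul {k : Type*} (A : Matrix m l R) (B : Matrix m n R)
    (G : Matrix m m R) (C : Matrix m k R) :
    (fromCols A B)ᴴ * G * C = fromRows (Aᴴ * G * C) (Bᴴ * G * C) := by
  rw [conjTranspose_fromCols_eq_fromRows_conjTranspose, fromRows_mul, fromRows_mul]

theorem conjTranspose_replicateCol_mul_mul_eq_zero {ι : Type*} {G : Matrix m m R}
    (hG : G.IsHermitian) {U : Matrix m n R} {v : m → R} (horth : (Uᴴ * G) *ᵥ v = 0) :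
    (replicateCol ι v)ᴴ * G * U = 0 := by
  have hcol : Uᴴ * G * replicateCol ι v = 0 := by
    rw [← replicateCol_mulVec, horth, replicateCol_zero]
  simpa [conjTranspose_mul, hG.eq, Matrix.mul_assoc] using congrArg conjTranspose hcol

end Blocks

variable {m n K : Type*} [Fintype m] [Field K]

theorem mul_mulVec_eq_zero_of_mulVec_eq_smul [DecidableEq m] {A B : Matrix m m K} {u : m → K}
    {c : K} {V : Matrix n m K} (hA : IsUnit A) (hu : u ≠ 0) (hgen : A *ᵥ u = c • (B *ᵥ u))
    (horth : (V * A) *ᵥ u = 0) : (V * B) *ᵥ u = 0 := by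
  have hAu : A *ᵥ u ≠ 0 := fun h ↦
    hu (mulVec_injective_iff_isUnit.mpr hA (h.trans (mulVec_zero A).symm))
  have hc : c ≠ 0 := by rintro rfl; exact hAu (by rw [hgen, zero_smul])
  rw [← mulVec_mulVec, hgen, mulVec_smul, mulVec_mulVec] at horth
  exact (smul_eq_zero.mp horth).resolve_left hc

variable [Fintype n] [DecidableEq n] [StarRing K]

theorem conjTranspose_mul_mul_eq_one_of_mul_self_eq {G : Matrix m m K} {U : Matrix m n K}
    {S Q : Matrix n n K} (hS : S.IsHermitian) (hSdet : IsUnit S.det) (hSS : S * S = Uᴴ * G * U)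
    (hQ : Qᴴ * Q = 1) : (U * S⁻¹ * Q)ᴴ * G * (U * S⁻¹ * Q) = 1 := by
  have hSinvH : (S⁻¹)ᴴ = S⁻¹ := by rw [conjTranspose_nonsing_inv, hS.eq]
  calc (U * S⁻¹ * Q)ᴴ * G * (U * S⁻¹ * Q) = Qᴴ * S⁻¹ * (S * S) * S⁻¹ * Q := by
        rw [hSS]; simp only [conjTranspose_mul, hSinvH, Matrix.mul_assoc]
    _ = 1 := by
      simp only [Matrix.mul_assoc, nonsing_inv_mul_cancel_left _ _ hSdet,
        mul_nonsing_inv_cancel_left _ _ hSdet, hQ]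

end Matrix

theorem gevp_form_implies_stationary_general (L : ℕ)
    (G1 Gz : Matrix (Fin 1 ⊕ Fin L) (Fin 1 ⊕ Fin L) ℂ)
    (hG1 : G1.PosDef) (hGz : Gz.PosDef)
    (u1 : Fin 1 ⊕ Fin L → ℂ) (hu1 : u1 ≠ 0) (lam : ℝ)
    (hgevp : Gz *ᵥ u1 = (lam : ℂ) • (G1 *ᵥ u1))
    (Uz : Matrix (Fin 1 ⊕ Fin L) (Fin L) ℂ)
    (horth : (Uzᴴ * Gz) *ᵥ u1 = 0)
    (hinv : IsUnit (Matrix.fromCols (Matrix.of fun i (_ : Fin 1) => u1 i) Uz).det)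
    (θ : ℝ) (Q : Matrix (Fin L) (Fin L) ℂ) (hQ1 : Qᴴ * Q = 1) :
    ∀ S : Matrix (Fin L) (Fin L) ℂ, S.PosDef → S * S = Uzᴴ * Gz * Uz →
      ∀ (w1 : Fin 1 ⊕ Fin L → ℂ) (Wz : Matrix (Fin 1 ⊕ Fin L) (Fin L) ℂ)
        (W : Matrix (Fin 1 ⊕ Fin L) (Fin 1 ⊕ Fin L) ℂ),
        w1 = (Complex.exp (θ * Complex.I) *
          ((Real.sqrt ((star u1 ⬝ᵥ (G1 *ᵥ u1)).re))⁻¹ : ℝ)) • u1 →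
        Wz = Uz * S⁻¹ * Q →
        W = Matrix.fromCols (Matrix.of fun i (_ : Fin 1) => w1 i) Wz →
        IsUnit W.det ∧
        (Wᴴ * G1) *ᵥ w1 = Pi.single (Sum.inl 0) 1 ∧
        Wᴴ * Gz * Wz = Ez L := by
  intro S hS hSS w1 Wz W hw1 hWz hW
  change IsUnit (fromCols (replicateCol (Fin 1) u1) Uz).det at hinv
  change W = fromCols (replicateCol (Fin 1) w1) Wz at hW
  set c : ℂ := Complex.exp (θ * Complex.I) * ((√(star u1 ⬝ᵥ (G1 *ᵥ u1)).re)⁻¹ : ℝ)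
  have hnormalized : star w1 ⬝ᵥ (G1 *ᵥ w1) = 1 := by
    simp only [hw1, star_smul, mulVec_smul, smul_dotProduct, dotProduct_smul, smul_eq_mul]
    linear_combination Complex.star_mul_mul_eq_one_of_pos (hG1.dotProduct_mulVec_pos hu1) θ
  have hSdet : IsUnit S.det := hS.isUnit.map detMonoidHom
  have hG1orth : Uzᴴ *ᵥ (G1 *ᵥ u1) = 0 := by
    rw [mulVec_mulVec]
    exact mul_mulVec_eq_zero_of_mulVec_eq_smul hGz.isUnit hu1 hgevp horth
  have hGzorth : (Uzᴴ * Gz) *ᵥ w1 = 0 := by rw [hw1, mulVec_smul, horth, smul_zero]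
  subst hW
  refine ⟨?_, ?_, ?_⟩
  · have hc : c ≠ 0 := by
      rintro hc
      simp [hw1, hc] at hnormalized
    rw [hw1, replicateCol_smul, ← Matrix.mul_one (replicateCol _ u1), ← Matrix.mul_smul, hWz,
      Matrix.mul_assoc]
    exact isUnit_det_fromCols_mul hinv (by simpa using hc)
      (by rw [det_mul]; exact (isUnit_nonsing_inv_det _ hSdet).mul (isUnit_det_of_left_inverse hQ1))
  · have hWz_G1_w1 : (Wzᴴ * G1) *ᵥ w1 = 0 := by
      simp [hWz, hw1, conjTranspose_mul, ← mulVec_mulVec, mulVec_smul, hG1orth]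
    rw [conjTranspose_fromCols_mul_mulVec, hWz_G1_w1]
    ext (i | i)
    · simp [← mulVec_mulVec, replicateRow_mulVec_eq_const, hnormalized, Fin.fin_one_eq_zero i]
    · simp
  · rw [conjTranspose_fromCols_mul_mul, hWz,
      conjTranspose_mul_mul_eq_one_of_mul_self_eq hS.isHermitian hSdet hSS hQ1, ← Matrix.mul_assoc,
      ← Matrix.mul_assoc, conjTranspose_replicateCol_mul_mul_eq_zero hGz.isHermitian hGzorth]
    ext (i | i) j <;> simp [Ez, one_apply]

/-- If `(u_1, λ)` is a generalized eigenpair of `(G_z, G_1)`, `U_zᴴ G_z u_1 = 0`,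
`[u_1, U_z]` is invertible, `θ ∈ ℝ` and `Q` is unitary, then
`W = [w_1, W_z]` with `w_1 = u_1 (u_1ᴴ G_1 u_1)^{−1/2} e^{iθ}` and
`W_z = U_z (U_zᴴ G_z U_z)^{−1/2} Q` is invertible and satisfies the stationary
conditions `Wᴴ G_1 w_1 = e_1` and `Wᴴ G_z W_z = E_z`. -/
theorem gevp_form_implies_stationary (L : ℕ) (hL : 1 ≤ L)
    (G1 Gz : Matrix (Fin 1 ⊕ Fin L) (Fin 1 ⊕ Fin L) ℂ)
    (hG1 : G1.PosDef) (hGz : Gz.PosDef)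
    (u1 : Fin 1 ⊕ Fin L → ℂ) (hu1 : u1 ≠ 0) (lam : ℝ)
    (hgevp : Gz *ᵥ u1 = (lam : ℂ) • (G1 *ᵥ u1))
    (Uz : Matrix (Fin 1 ⊕ Fin L) (Fin L) ℂ)
    (horth : (Uzᴴ * Gz) *ᵥ u1 = 0)
    (hinv : IsUnit (Matrix.fromCols (Matrix.of fun i (_ : Fin 1) => u1 i) Uz).det)
    (θ : ℝ) (Q : Matrix (Fin L) (Fin L) ℂ) (hQ1 : Qᴴ * Q = 1) (hQ2 : Q * Qᴴ = 1) :
    ∀ S : Matrix (Fin L) (Fin L) ℂ, S.PosDef → S * S = Uzᴴ * Gz * Uz →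
      ∀ (w1 : Fin 1 ⊕ Fin L → ℂ) (Wz : Matrix (Fin 1 ⊕ Fin L) (Fin L) ℂ)
        (W : Matrix (Fin 1 ⊕ Fin L) (Fin 1 ⊕ Fin L) ℂ),
        w1 = (Complex.exp (θ * Complex.I) *
          ((Real.sqrt ((star u1 ⬝ᵥ (G1 *ᵥ u1)).re))⁻¹ : ℝ)) • u1 →
        Wz = Uz * S⁻¹ * Q →
        W = Matrix.fromCols (Matrix.of fun i (_ : Fin 1) => w1 i) Wz →
        IsUnit W.det ∧
        (Wᴴ * G1) *ᵥ w1 = Pi.single (Sum.inl 0) 1 ∧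
        Wᴴ * Gz * Wz = Ez L :=
  gevp_form_implies_stationary_general L G1 Gz hG1 hGz u1 hu1 lam hgevp Uz horth hinv θ Q hQ1
end

section
/- Let K = 1 and M ≥ 2, and suppose G_1 and G_z are positive definite Hermitian M×M complex matrices. Let λ be the largest generalized eigenvalue of the pencil (G_z, G_1), i.e., λ is real, there is a nonzero u_1 with G_z u_1 = λ G_1 u_1, and every real μ admitting a nonzero u with G_z u = μ G_1 u satisfies μ ≤ λ. Let U_z ∈ ℂ^{M×(M−1)} satisfy U_z^H G_z u_1 = 0 with [u_1, U_z] invertible. Then the matrix W = [u_1 (u_1^H G_1 u_1)^{−1/2}, U_z (U_z^H G_z U_z)^{−1/2}] globally minimizes J_W(W) = w_1^H G_1 w_1 + trace(W_z^H G_z W_z) − 2 log|det W| over all invertible M×M complex matrices. -/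
/-! For positive definite `G`, `X ↦ re tr (Xᴴ G X) − 2 log |det X|` is bounded below by
`n + log det G`: with `P = Xᴴ G X` it equals `∑ (eᵢ − log eᵢ) + log det G` over the eigenvalues
`eᵢ > 0` of `P`, and `e − log e ≥ 1`. Maximality of `λ` gives the Loewner bound `G_z ≤ λ G_1`
(conjugate by `G_1^{−1/2}`), so replacing `G_1` by `λ⁻¹ G_z` in the first column only lowers `J_W`;
rescaling that column by `λ^{−1/2}` turns the result into the function above for `G = G_z`, whence
`J_W ≥ M + log det G_z − log λ`. The proposed `W` attains the bound: its two blocks of columns are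
`G_z`-orthogonal, so `Wᴴ G_z W` is block triangular with diagonal blocks `λ` and `I`, giving
`|det W|² det G_z = λ`, while `w_1ᴴ G_1 w_1 = 1` and `W_zᴴ G_z W_z = I`. -/

open Matrix
open scoped ComplexOrder

/-- The cost `J_W(W) = w_1ᴴ G_1 w_1 + trace(W_zᴴ G_z W_z) − 2 log|det W|` (K = 1). `M × M` complex
matrices (`M = 1 + L`) are indexed by `Fin 1 ⊕ Fin L`: the first column (`Sum.inl 0`) is `w_1` and
the last `L` columns (`Sum.inr`) form `W_z`. In the theorem, `B^{−1/2}` for positive definite `B`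
is `S⁻¹` for any positive definite `S` with `S * S = B`, and `(u_1ᴴ G_1 u_1)^{−1/2}` is
`(Real.sqrt (·).re)⁻¹`. -/
noncomputable def JW {L : ℕ}
    (G1 Gz : Matrix (Fin 1 ⊕ Fin L) (Fin 1 ⊕ Fin L) ℂ)
    (W : Matrix (Fin 1 ⊕ Fin L) (Fin 1 ⊕ Fin L) ℂ) : ℝ :=
  (star (fun i => W i (Sum.inl 0)) ⬝ᵥ (G1 *ᵥ (fun i => W i (Sum.inl 0)))).re
    + (Matrix.trace ((W.submatrix id Sum.inr)ᴴ * Gz * (W.submatrix id Sum.inr))).re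
    - 2 * Real.log ‖W.det‖

namespace Matrix

variable {n m : Type*} [Fintype n]

lemma conjTranspose_mul_mul_apply_self [Fintype m] (G : Matrix n n ℂ) (X : Matrix n m ℂ) (j : m) :
    (Xᴴ * G * X) j j = star (fun i => X i j) ⬝ᵥ G *ᵥ fun i => X i j := by
  simp only [mul_apply, conjTranspose_apply, dotProduct, mulVec, Pi.star_apply, Finset.sum_mul,
    Finset.mul_sum]
  rw [Finset.sum_comm]
  exact Finset.sum_congr rfl fun k _ => Finset.sum_congr rfl fun i _ => by ring

lemma trace_conjTranspose_mul_mul [Fintype m] (G : Matrix n n ℂ) (X : Matrix n m ℂ) :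
    (Xᴴ * G * X).trace = ∑ j, star (fun i => X i j) ⬝ᵥ G *ᵥ fun i => X i j :=
  Finset.sum_congr rfl fun j _ => conjTranspose_mul_mul_apply_self G X j

lemma dotProduct_mulVec_real_smul (G : Matrix n n ℂ) (a : ℝ) (v : n → ℂ) :
    star (a • v) ⬝ᵥ G *ᵥ (a • v) = a ^ 2 • (star v ⬝ᵥ G *ᵥ v) := by
  rw [star_smul, star_trivial, mulVec_smul, smul_dotProduct, dotProduct_smul, smul_smul, sq]

lemma PosDef.dotProduct_mulVec_inv_sqrt_smul_self {G : Matrix n n ℂ} (hG : G.PosDef)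
    {u : n → ℂ} (hu : u ≠ 0) :
    star ((Real.sqrt (star u ⬝ᵥ G *ᵥ u).re)⁻¹ • u) ⬝ᵥ
      G *ᵥ ((Real.sqrt (star u ⬝ᵥ G *ᵥ u).re)⁻¹ • u) = 1 := by
  set r := (star u ⬝ᵥ G *ᵥ u).re
  have hpos : 0 < r := hG.re_dotProduct_pos hu
  have hreal : star u ⬝ᵥ G *ᵥ u = r :=
    Complex.eq_re_of_ofReal_le (r := 0) (by simpa using (hG.dotProduct_mulVec_pos hu).le)
  rw [dotProduct_mulVec_real_smul, inv_pow, Real.sq_sqrt hpos.le, hreal, Complex.real_smul,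
    ← Complex.ofReal_mul, inv_mul_cancel₀ hpos.ne', Complex.ofReal_one]

lemma pos_of_mulVec_eq_smul_mulVec {G1 Gz : Matrix n n ℂ} (hG1 : G1.PosSemidef) (hGz : Gz.PosDef)
    {u : n → ℂ} (hu : u ≠ 0) {lam : ℝ} (h : Gz *ᵥ u = (lam : ℂ) • (G1 *ᵥ u)) : 0 < lam := by
  have hz := hGz.re_dotProduct_pos hu
  rw [h, dotProduct_smul, Complex.coe_smul, RCLike.re_to_complex, Complex.smul_re,
    smul_eq_mul] at hz
  exact pos_of_mul_pos_left hz (hG1.re_dotProduct_nonneg u)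

lemma det_conjTranspose_fromCols_mul_mul {n₁ n₂ : Type*} [Fintype n₁] [Fintype n₂]
    [DecidableEq n₁] [DecidableEq n₂] (G : Matrix n n ℂ) (C₁ : Matrix n n₁ ℂ)
    (C₂ : Matrix n n₂ ℂ) (h : C₂ᴴ * G * C₁ = 0) :
    ((fromCols C₁ C₂)ᴴ * G * fromCols C₁ C₂).det = (C₁ᴴ * G * C₁).det * (C₂ᴴ * G * C₂).det := by
  rw [conjTranspose_fromCols_eq_fromRows_conjTranspose, fromRows_mul, fromRows_mul_fromCols, h,
    det_fromBlocks_zero₂₁]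

lemma conjTranspose_mul_nonsing_inv_mul_mul_nonsing_inv {R : Type*} [CommRing R] [StarRing R]
    [Fintype m] [DecidableEq m] {S : Matrix m m R} (hS : S.IsHermitian) (hSdet : IsUnit S.det)
    {G : Matrix n n R} {X : Matrix n m R} (hSS : S * S = Xᴴ * G * X) :
    (X * S⁻¹)ᴴ * G * (X * S⁻¹) = 1 := by
  calc (X * S⁻¹)ᴴ * G * (X * S⁻¹) = S⁻¹ * (S * S) * S⁻¹ := by
        simp only [conjTranspose_mul, conjTranspose_nonsing_inv, hS.eq, hSS, Matrix.mul_assoc]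
    _ = 1 := by
        rw [Matrix.mul_assoc, mul_nonsing_inv_cancel_right _ _ hSdet, nonsing_inv_mul _ hSdet]

open scoped MatrixOrder in
lemma re_dotProduct_mulVec_le_of_le {A B : Matrix n n ℂ} (h : A ≤ B) (x : n → ℂ) :
    (star x ⬝ᵥ A *ᵥ x).re ≤ (star x ⬝ᵥ B *ᵥ x).re := by
  have := (le_iff.mp h).re_dotProduct_nonneg x
  rw [sub_mulVec, dotProduct_sub, map_sub, RCLike.re_to_complex, RCLike.re_to_complex] at this
  linarith

variable [DecidableEq n]

lemma norm_det_conjTranspose_mul_mul (G X : Matrix n n ℂ) :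
    ‖(Xᴴ * G * X).det‖ = ‖X.det‖ ^ 2 * ‖G.det‖ := by
  rw [det_mul, det_mul, det_conjTranspose, norm_mul, norm_mul, norm_star]
  ring

lemma PosDef.card_le_re_trace_sub_log_norm_det {P : Matrix n n ℂ} (hP : P.PosDef) :
    (Fintype.card n : ℝ) ≤ P.trace.re - Real.log ‖P.det‖ := by
  have hpos := hP.eigenvalues_pos
  have htrace : P.trace.re = ∑ i, hP.1.eigenvalues i := by
    simp [hP.1.trace_eq_sum_eigenvalues]
  have hdet : ‖P.det‖ = ∏ i, hP.1.eigenvalues i := by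
    rw [hP.1.det_eq_prod_eigenvalues, norm_prod]
    exact Finset.prod_congr rfl fun i _ => by simp [(hpos i).le]
  rw [htrace, hdet, Real.log_prod fun i _ => (hpos i).ne', ← Finset.sum_sub_distrib]
  calc (Fintype.card n : ℝ) = ∑ _i : n, (1 : ℝ) := by simp
    _ ≤ ∑ i, (hP.1.eigenvalues i - Real.log (hP.1.eigenvalues i)) :=
      Finset.sum_le_sum fun i _ => by linarith [Real.log_le_sub_one_of_pos (hpos i)]

lemma PosDef.card_add_log_norm_det_le {G : Matrix n n ℂ} (hG : G.PosDef) {X : Matrix n n ℂ}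
    (hX : IsUnit X.det) :
    (Fintype.card n : ℝ) + Real.log ‖G.det‖ ≤ (Xᴴ * G * X).trace.re - 2 * Real.log ‖X.det‖ := by
  have hP := hG.conjTranspose_mul_mul_same
    (mulVec_injective_of_isUnit ((isUnit_iff_isUnit_det X).mpr hX))
  have hX0 : ‖X.det‖ ≠ 0 := norm_ne_zero_iff.mpr hX.ne_zero
  have hG0 : ‖G.det‖ ≠ 0 := norm_ne_zero_iff.mpr hG.det_pos.ne'
  have key := hP.card_le_re_trace_sub_log_norm_det
  rw [norm_det_conjTranspose_mul_mul, Real.log_mul (pow_ne_zero 2 hX0) hG0, Real.log_pow] at key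
  push_cast at key
  linarith

section LoewnerOrder

open scoped MatrixOrder Matrix.Norms.L2Operator

lemma le_smul_of_forall_generalized_eigenvalue_le {G1 Gz : Matrix n n ℂ} (hG1 : G1.PosDef)
    (hGz : Gz.IsHermitian) {lam : ℝ}
    (hmax : ∀ (mu : ℝ) (u : n → ℂ), u ≠ 0 → Gz *ᵥ u = (mu : ℂ) • (G1 *ᵥ u) → mu ≤ lam) :
    Gz ≤ lam • G1 := by
  set A := CFC.sqrt G1
  have hA : Aᴴ = A := (CFC.sqrt_nonneg G1).posSemidef.1
  have hAA : A * A = G1 := CFC.sqrt_mul_sqrt_self G1 hG1.posSemidef.nonneg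
  have hAdet : IsUnit A.det := by
    have h := hG1.det_pos.ne'
    rw [← hAA, det_mul] at h
    exact IsUnit.mk0 _ (left_ne_zero_of_mul h)
  set C := A⁻¹ * Gz * A⁻¹
  have hC : C.IsHermitian := by
    simpa [C, conjTranspose_nonsing_inv, hA] using isHermitian_conjTranspose_mul_mul A⁻¹ hGz
  have hGzA : Gz * A⁻¹ = A * C := by
    simp only [C, ← Matrix.mul_assoc, mul_nonsing_inv A hAdet, one_mul]
  -- an eigenpair `(x, v)` of `C` gives the generalized eigenpair `(x, A⁻¹ v)` of the pencil
  have hCle : C ≤ algebraMap ℝ _ lam := by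
    rw [le_algebraMap_iff_spectrum_le hC.isSelfAdjoint, hC.spectrum_real_eq_range_eigenvalues]
    rintro _ ⟨i, rfl⟩
    set v : n → ℂ := ⇑(hC.eigenvectorBasis i)
    have hv : v ≠ 0 := fun h => hC.eigenvectorBasis.orthonormal.ne_zero i (by simpa [v] using h)
    refine hmax _ (A⁻¹ *ᵥ v) (fun h => hv ?_) ?_
    · rw [← one_mulVec v, ← mul_nonsing_inv A hAdet, ← mulVec_mulVec, h, mulVec_zero]
    · have hG1A : G1 * A⁻¹ = A := by
        rw [← hAA, Matrix.mul_assoc, mul_nonsing_inv A hAdet, Matrix.mul_one]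
      rw [mulVec_mulVec, mulVec_mulVec, hGzA, hG1A, ← mulVec_mulVec,
        hC.mulVec_eigenvectorBasis i, mulVec_smul, Complex.coe_smul]
  have hACA : A * C * A = Gz := by
    rw [← hGzA, Matrix.mul_assoc, nonsing_inv_mul A hAdet, Matrix.mul_one]
  have := star_left_conjugate_le_conjugate hCle A
  rwa [star_eq_conjTranspose, hA, hACA, Algebra.algebraMap_eq_smul_one, mul_smul_comm,
    Matrix.mul_one, smul_mul_assoc, hAA] at this

end LoewnerOrder

end Matrix

open scoped MatrixOrder in
lemma le_JW_of_le_smul {L : ℕ} {G1 Gz : Matrix (Fin 1 ⊕ Fin L) (Fin 1 ⊕ Fin L) ℂ}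
    (hGz : Gz.PosDef) {lam : ℝ} (hlam : 0 < lam) (hle : Gz ≤ lam • G1)
    {W : Matrix (Fin 1 ⊕ Fin L) (Fin 1 ⊕ Fin L) ℂ} (hW : IsUnit W.det) :
    (1 + L : ℝ) + Real.log ‖Gz.det‖ - Real.log lam ≤ JW G1 Gz W := by
  set w1 : Fin 1 ⊕ Fin L → ℂ := fun i => W i (Sum.inl 0)
  set s : ℝ := (Real.sqrt lam)⁻¹
  have hs : 0 < s := by positivity
  set T := W.updateCol (Sum.inl 0) ((s : ℂ) • w1)
  have hTdet : T.det = s * W.det := by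
    rw [det_updateCol_smul, updateCol_eq_self]
  have hT : IsUnit T.det := by
    rw [hTdet]
    exact (IsUnit.mk0 _ (by exact_mod_cast hs.ne')).mul hW
  have htrace : (Tᴴ * Gz * T).trace.re = s ^ 2 * (star w1 ⬝ᵥ Gz *ᵥ w1).re
      + ((W.submatrix id Sum.inr)ᴴ * Gz * (W.submatrix id Sum.inr)).trace.re := by
    have hcol₁ : (fun i => T i (Sum.inl 0)) = s • w1 := by
      ext i
      simp [T, Complex.coe_smul]
    have hcol₂ : ∀ j, (fun i => T i (Sum.inr j)) = fun i => W.submatrix id Sum.inr i j := by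
      intro j
      ext i
      simp [T]
    rw [trace_conjTranspose_mul_mul, trace_conjTranspose_mul_mul, Fintype.sum_sum_type,
      Fin.sum_univ_one, hcol₁, dotProduct_mulVec_real_smul, Complex.add_re, Complex.smul_re,
      smul_eq_mul]
    simp only [hcol₂]
  have hfirst : s ^ 2 * (star w1 ⬝ᵥ Gz *ᵥ w1).re ≤ (star w1 ⬝ᵥ G1 *ᵥ w1).re := by
    have := re_dotProduct_mulVec_le_of_le hle w1
    rw [smul_mulVec, dotProduct_smul, Complex.smul_re, smul_eq_mul] at this
    rw [inv_pow, Real.sq_sqrt hlam.le, inv_mul_le_iff₀ hlam]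
    exact this
  have hlogT : Real.log ‖T.det‖ = Real.log ‖W.det‖ - Real.log lam / 2 := by
    rw [hTdet, norm_mul, Complex.norm_real, Real.norm_of_nonneg hs.le,
      Real.log_mul hs.ne' (norm_ne_zero_iff.mpr hW.ne_zero), Real.log_inv, Real.log_sqrt hlam.le]
    ring
  have key := hGz.card_add_log_norm_det_le hT
  rw [htrace, hlogT, Fintype.card_sum, Fintype.card_fin, Fintype.card_fin] at key
  push_cast at key
  unfold JW
  linarith

lemma JW_fromCols_eq {L : ℕ} {G1 Gz : Matrix (Fin 1 ⊕ Fin L) (Fin 1 ⊕ Fin L) ℂ}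
    (hG1 : G1.PosDef) {u1 : Fin 1 ⊕ Fin L → ℂ} (hu1 : u1 ≠ 0) {lam : ℝ} (hlam : 0 < lam)
    (hgevp : Gz *ᵥ u1 = (lam : ℂ) • (G1 *ᵥ u1)) {Uz : Matrix (Fin 1 ⊕ Fin L) (Fin L) ℂ}
    (horth : (Uzᴴ * Gz) *ᵥ u1 = 0) {S : Matrix (Fin L) (Fin L) ℂ} (hS : S.PosDef)
    (hSS : S * S = Uzᴴ * Gz * Uz) {W : Matrix (Fin 1 ⊕ Fin L) (Fin 1 ⊕ Fin L) ℂ}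
    (hW : W = Matrix.fromCols
          (Matrix.of fun i (_ : Fin 1) =>
            (((Real.sqrt ((star u1 ⬝ᵥ (G1 *ᵥ u1)).re))⁻¹ : ℝ) : ℂ) * u1 i)
          (Uz * S⁻¹)) :
    IsUnit W.det ∧ JW G1 Gz W = (1 + L : ℝ) + Real.log ‖Gz.det‖ - Real.log lam := by
  set w1 := (Real.sqrt (star u1 ⬝ᵥ G1 *ᵥ u1).re)⁻¹ • u1
  set C₁ := replicateCol (Fin 1) w1
  set C₂ := Uz * S⁻¹
  replace hW : W = fromCols C₁ C₂ := hW
  have hw1 : star w1 ⬝ᵥ G1 *ᵥ w1 = 1 := hG1.dotProduct_mulVec_inv_sqrt_smul_self hu1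
  have h22 : C₂ᴴ * Gz * C₂ = 1 :=
    conjTranspose_mul_nonsing_inv_mul_mul_nonsing_inv hS.1
      ((isUnit_iff_isUnit_det S).mp hS.isUnit) hSS
  have h21 : C₂ᴴ * Gz * C₁ = 0 := by
    rw [conjTranspose_mul, Matrix.mul_assoc, Matrix.mul_assoc, ← Matrix.mul_assoc Uzᴴ,
      ← replicateCol_mulVec, mulVec_smul, horth, smul_zero, replicateCol_zero, Matrix.mul_zero]
  have h11 : (C₁ᴴ * Gz * C₁).det = lam := by
    rw [det_fin_one, conjTranspose_mul_mul_apply_self]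
    simp only [C₁, replicateCol_apply]
    rw [mulVec_smul, hgevp, smul_comm, ← mulVec_smul, dotProduct_smul, hw1, smul_eq_mul, mul_one]
  have hdet : ‖W.det‖ ^ 2 * ‖Gz.det‖ = lam := by
    rw [← norm_det_conjTranspose_mul_mul, hW, det_conjTranspose_fromCols_mul_mul _ _ _ h21, h11,
      h22, det_one, mul_one, Complex.norm_real, Real.norm_of_nonneg hlam.le]
  have hW0 : ‖W.det‖ ≠ 0 := fun h => by simp [h] at hdet; linarith
  have hGz0 : ‖Gz.det‖ ≠ 0 := fun h => by simp [h] at hdet; linarith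
  refine ⟨isUnit_iff_ne_zero.mpr (norm_ne_zero_iff.mp hW0), ?_⟩
  have hlogW : 2 * Real.log ‖W.det‖ = Real.log lam - Real.log ‖Gz.det‖ := by
    rw [← hdet, Real.log_mul (pow_ne_zero 2 hW0) hGz0, Real.log_pow]
    push_cast
    ring
  have hcol₁ : (fun i => W i (Sum.inl 0)) = w1 := by
    ext i
    simp [hW, C₁]
  have hcol₂ : W.submatrix id Sum.inr = C₂ := by
    ext i j
    simp [hW]
  rw [JW, hcol₁, hcol₂, hw1, h22, hlogW, trace_one]
  simp only [Complex.one_re, Fintype.card_fin, Complex.natCast_re]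
  ring

theorem largest_gevp_global_min_general (L : ℕ)
    (G1 Gz : Matrix (Fin 1 ⊕ Fin L) (Fin 1 ⊕ Fin L) ℂ)
    (hG1 : G1.PosDef) (hGz : Gz.PosDef)
    (u1 : Fin 1 ⊕ Fin L → ℂ) (hu1 : u1 ≠ 0) (lam : ℝ)
    (hgevp : Gz *ᵥ u1 = (lam : ℂ) • (G1 *ᵥ u1))
    (hmax : ∀ (mu : ℝ) (u : Fin 1 ⊕ Fin L → ℂ), u ≠ 0 →
      Gz *ᵥ u = (mu : ℂ) • (G1 *ᵥ u) → mu ≤ lam)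
    (Uz : Matrix (Fin 1 ⊕ Fin L) (Fin L) ℂ)
    (horth : (Uzᴴ * Gz) *ᵥ u1 = 0) :
    ∀ S : Matrix (Fin L) (Fin L) ℂ, S.PosDef → S * S = Uzᴴ * Gz * Uz →
      ∀ W : Matrix (Fin 1 ⊕ Fin L) (Fin 1 ⊕ Fin L) ℂ,
        W = Matrix.fromCols
          (Matrix.of fun i (_ : Fin 1) =>
            (((Real.sqrt ((star u1 ⬝ᵥ (G1 *ᵥ u1)).re))⁻¹ : ℝ) : ℂ) * u1 i)
          (Uz * S⁻¹) →
        IsUnit W.det ∧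
        ∀ W' : Matrix (Fin 1 ⊕ Fin L) (Fin 1 ⊕ Fin L) ℂ,
          IsUnit W'.det → JW G1 Gz W ≤ JW G1 Gz W' := by
  intro S hS hSS W hW
  have hlam : 0 < lam := pos_of_mulVec_eq_smul_mulVec hG1.posSemidef hGz hu1 hgevp
  have hle := le_smul_of_forall_generalized_eigenvalue_le hG1 hGz.1 hmax
  obtain ⟨hWdet, hJW⟩ := JW_fromCols_eq hG1 hu1 hlam hgevp horth hS hSS hW
  exact ⟨hWdet, fun W' hW' => hJW ▸ le_JW_of_le_smul hGz hlam hle hW'⟩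

/-- If `λ` is the largest generalized eigenvalue of the pencil `(G_z, G_1)` with
eigenvector `u_1`, and `U_zᴴ G_z u_1 = 0` with `[u_1, U_z]` invertible, then
`W = [u_1 (u_1ᴴ G_1 u_1)^{−1/2}, U_z (U_zᴴ G_z U_z)^{−1/2}]` globally minimizes
`J_W` over all invertible M×M complex matrices. -/
theorem largest_gevp_global_min (L : ℕ) (hL : 1 ≤ L)
    (G1 Gz : Matrix (Fin 1 ⊕ Fin L) (Fin 1 ⊕ Fin L) ℂ)
    (hG1 : G1.PosDef) (hGz : Gz.PosDef)
    (u1 : Fin 1 ⊕ Fin L → ℂ) (hu1 : u1 ≠ 0) (lam : ℝ)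
    (hgevp : Gz *ᵥ u1 = (lam : ℂ) • (G1 *ᵥ u1))
    (hmax : ∀ (mu : ℝ) (u : Fin 1 ⊕ Fin L → ℂ), u ≠ 0 →
      Gz *ᵥ u = (mu : ℂ) • (G1 *ᵥ u) → mu ≤ lam)
    (Uz : Matrix (Fin 1 ⊕ Fin L) (Fin L) ℂ)
    (horth : (Uzᴴ * Gz) *ᵥ u1 = 0)
    (hinv : IsUnit (Matrix.fromCols (Matrix.of fun i (_ : Fin 1) => u1 i) Uz).det) :
    ∀ S : Matrix (Fin L) (Fin L) ℂ, S.PosDef → S * S = Uzᴴ * Gz * Uz →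
      ∀ W : Matrix (Fin 1 ⊕ Fin L) (Fin 1 ⊕ Fin L) ℂ,
        W = Matrix.fromCols
          (Matrix.of fun i (_ : Fin 1) =>
            (((Real.sqrt ((star u1 ⬝ᵥ (G1 *ᵥ u1)).re))⁻¹ : ℝ) : ℂ) * u1 i)
          (Uz * S⁻¹) →
        IsUnit W.det ∧
        ∀ W' : Matrix (Fin 1 ⊕ Fin L) (Fin 1 ⊕ Fin L) ℂ,
          IsUnit W'.det → JW G1 Gz W ≤ JW G1 Gz W' :=
  largest_gevp_global_min_general L G1 Gz hG1 hGz u1 hu1 lam hgevp hmax Uz horth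
end
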